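/- arXiv:1907.05733 — 2 statements merged into one kernel-verified Lean document; each statement's English description precedes it below -/
import Mathlib

section
/- Let ε > 0 and let f be a function from the closed unit ball B of S₂^d to S₂^d satisfying |⟨f(x),f(y)⟩ − ⟨x,y⟩| ≤ ε for all x, y ∈ B. Define F : S₂^d → S₂^d by F(0) := 0 and F(x) := ‖x‖₂·( f(x/(2‖x‖₂)) − f(−x/(2‖x‖₂)) ) for x ≠ 0. Then for all x, y ∈ S₂^d: |⟨F(x),F(y)⟩ − ⟨x,y⟩| ≤ 4ε·‖x‖₂·‖y‖₂. -/
open Finset Matrix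

/-- The real vector space of `d × d` complex Hermitian matrices. -/
noncomputable abbrev HermMat (d : ℕ) := selfAdjoint (Matrix (Fin d) (Fin d) ℂ)

/-- The Hilbert–Schmidt inner product `⟨x, y⟩ = Tr (x y)` on Hermitian matrices. -/
noncomputable def hsInner {d : ℕ} (x y : HermMat d) : ℝ :=
  (((x : Matrix (Fin d) (Fin d) ℂ) * (y : Matrix (Fin d) (Fin d) ℂ)).trace).re

/-- The Hilbert–Schmidt norm `‖x‖₂ = (Tr x²)^{1/2}` on Hermitian matrices. -/
noncomputable def hsNorm {d : ℕ} (x : HermMat d) : ℝ :=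
  Real.sqrt (hsInner x x)

/-- The set of rank-one orthogonal projections in `ℂ^{d×d}`, viewed inside the
Hermitian matrices. -/
def rankOneProjSet (d : ℕ) : Set (HermMat d) :=
  { p | ∃ v : EuclideanSpace ℂ (Fin d), ‖v‖ = 1 ∧
    (p : Matrix (Fin d) (Fin d) ℂ) = Matrix.of fun i j => v i * star (v j) }

set_option linter.unusedVariables false

lemma hsInner_smul_left {d : ℕ} (c : ℝ) (x y : HermMat d) :
    hsInner (c • x) y = c * hsInner x y := by
  simp [hsInner, Matrix.smul_mul, Complex.real_smul]

lemma hsInner_smul_right {d : ℕ} (c : ℝ) (x y : HermMat d) :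
    hsInner x (c • y) = c * hsInner x y := by
  simp [hsInner, Matrix.mul_smul, Complex.real_smul]

lemma hsInner_neg_left {d : ℕ} (x y : HermMat d) :
    hsInner (-x) y = - hsInner x y := by
  simp [hsInner]

lemma hsInner_neg_right {d : ℕ} (x y : HermMat d) :
    hsInner x (-y) = - hsInner x y := by
  simp [hsInner]

lemma hsInner_sub_left {d : ℕ} (x y z : HermMat d) :
    hsInner (x - y) z = hsInner x z - hsInner y z := by
  simp [hsInner, Matrix.sub_mul]

lemma hsInner_sub_right {d : ℕ} (x y z : HermMat d) :
    hsInner x (y - z) = hsInner x y - hsInner x z := by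
  simp [hsInner, Matrix.mul_sub]

lemma hsInner_zero_left {d : ℕ} (y : HermMat d) : hsInner 0 y = 0 := by
  simp [hsInner]

lemma hsInner_zero_right {d : ℕ} (y : HermMat d) : hsInner y 0 = 0 := by
  simp [hsInner]

lemma hsInner_self_eq {d : ℕ} (x : HermMat d) :
    hsInner x x = ∑ i, ∑ j, Complex.normSq ((x : Matrix (Fin d) (Fin d) ℂ) i j) := by
  have h : ((x : Matrix (Fin d) (Fin d) ℂ))ᴴ = (x : Matrix (Fin d) (Fin d) ℂ) := x.2
  have hx : ∀ i j, (x : Matrix (Fin d) (Fin d) ℂ) j i = star ((x : Matrix (Fin d) (Fin d) ℂ) i j) := by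
    intro i j
    conv_lhs => rw [← h]
    rw [Matrix.conjTranspose_apply]
  simp only [hsInner, Matrix.trace, Matrix.diag, Matrix.mul_apply, Complex.re_sum]
  refine Finset.sum_congr rfl fun i _ => ?_
  refine Finset.sum_congr rfl fun j _ => ?_
  rw [hx i j, Complex.star_def, Complex.mul_conj]
  simp

lemma hsInner_self_nonneg {d : ℕ} (x : HermMat d) : 0 ≤ hsInner x x := by
  rw [hsInner_self_eq]
  exact Finset.sum_nonneg fun i _ => Finset.sum_nonneg fun j _ => Complex.normSq_nonneg _

lemma hsInner_self_pos {d : ℕ} (x : HermMat d) (hx : x ≠ 0) : 0 < hsInner x x := by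
  rw [hsInner_self_eq]
  have hx' : (x : Matrix (Fin d) (Fin d) ℂ) ≠ 0 := by
    exact fun h => hx (Subtype.ext h)
  obtain ⟨i, j, hij⟩ : ∃ i j, (x : Matrix (Fin d) (Fin d) ℂ) i j ≠ 0 := by
    by_contra h
    push_neg at h
    exact hx' (by ext i j; exact h i j)
  have h1 : 0 < Complex.normSq ((x : Matrix (Fin d) (Fin d) ℂ) i j) := by
    simpa [Complex.normSq_pos] using hij
  calc (0:ℝ) < Complex.normSq ((x : Matrix (Fin d) (Fin d) ℂ) i j) := h1
    _ ≤ _ := by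
        refine Finset.single_le_sum (f := fun i => ∑ j, Complex.normSq ((x : Matrix (Fin d) (Fin d) ℂ) i j)) (fun i _ => Finset.sum_nonneg fun j _ => Complex.normSq_nonneg _) (Finset.mem_univ i) |>.trans' ?_
        exact Finset.single_le_sum (fun j _ => Complex.normSq_nonneg _) (Finset.mem_univ j)

lemma hsNorm_nonneg {d : ℕ} (x : HermMat d) : 0 ≤ hsNorm x := Real.sqrt_nonneg _

lemma hsNorm_pos {d : ℕ} (x : HermMat d) (hx : x ≠ 0) : 0 < hsNorm x :=
  Real.sqrt_pos.mpr (hsInner_self_pos x hx)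

lemma hsNorm_smul {d : ℕ} (c : ℝ) (x : HermMat d) : hsNorm (c • x) = |c| * hsNorm x := by
  rw [hsNorm, hsInner_smul_left, hsInner_smul_right, ← mul_assoc, ← sq,
    Real.sqrt_mul (sq_nonneg c), Real.sqrt_sq_eq_abs, hsNorm]

lemma hsNorm_neg {d : ℕ} (x : HermMat d) : hsNorm (-x) = hsNorm x := by
  rw [hsNorm, hsInner_neg_left, hsInner_neg_right, neg_neg, hsNorm]

theorem stmt12 (d : ℕ) (ε : ℝ) (hε : 0 < ε)
    (f : HermMat d → HermMat d)
    (hsym : ∀ x ∈ { x : HermMat d | hsNorm x ≤ 1 }, ∀ y ∈ { x : HermMat d | hsNorm x ≤ 1 },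
      |hsInner (f x) (f y) - hsInner x y| ≤ ε)
    (F : HermMat d → HermMat d)
    (hF0 : F 0 = 0)
    (hFdef : ∀ x : HermMat d, x ≠ 0 →
      F x = hsNorm x • (f ((2 * hsNorm x)⁻¹ • x) - f (-((2 * hsNorm x)⁻¹ • x)))) :
    ∀ x y : HermMat d,
      |hsInner (F x) (F y) - hsInner x y| ≤ 4 * ε * hsNorm x * hsNorm y := by
  have hN0 : hsNorm (0 : HermMat d) = 0 := by
    simp [hsNorm, hsInner_zero_left]
  intro x y
  by_cases hx : x = 0
  · subst hx
    rw [hF0, hsInner_zero_left, hsInner_zero_left, hN0]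
    simp
  by_cases hy : y = 0
  · subst hy
    rw [hF0, hsInner_zero_right, hsInner_zero_right, hN0]
    simp
  have hnx := hsNorm_pos x hx
  have hny := hsNorm_pos y hy
  have hna : hsNorm ((2 * hsNorm x)⁻¹ • x) = 1/2 := by
    rw [hsNorm_smul, abs_of_pos (by positivity)]
    field_simp
  have hnb : hsNorm ((2 * hsNorm y)⁻¹ • y) = 1/2 := by
    rw [hsNorm_smul, abs_of_pos (by positivity)]
    field_simp
  have ma : ((2 * hsNorm x)⁻¹ • x) ∈ { x : HermMat d | hsNorm x ≤ 1 } := by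
    rw [Set.mem_setOf_eq, hna]; norm_num
  have ma' : (-((2 * hsNorm x)⁻¹ • x)) ∈ { x : HermMat d | hsNorm x ≤ 1 } := by
    rw [Set.mem_setOf_eq, hsNorm_neg, hna]; norm_num
  have mb : ((2 * hsNorm y)⁻¹ • y) ∈ { x : HermMat d | hsNorm x ≤ 1 } := by
    rw [Set.mem_setOf_eq, hnb]; norm_num
  have mb' : (-((2 * hsNorm y)⁻¹ • y)) ∈ { x : HermMat d | hsNorm x ≤ 1 } := by
    rw [Set.mem_setOf_eq, hsNorm_neg, hnb]; norm_num
  have h1 := hsym _ ma _ mb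
  have h2 := hsym _ ma _ mb'
  have h3 := hsym _ ma' _ mb
  have h4 := hsym _ ma' _ mb'
  rw [hsInner_neg_right] at h2
  rw [hsInner_neg_left] at h3
  rw [hsInner_neg_left, hsInner_neg_right, neg_neg] at h4
  rw [hFdef x hx, hFdef y hy, hsInner_smul_left, hsInner_smul_right,
    hsInner_sub_left, hsInner_sub_right, hsInner_sub_right]
  have hab : hsInner ((2 * hsNorm x)⁻¹ • x) ((2 * hsNorm y)⁻¹ • y)
      = (2 * hsNorm x)⁻¹ * ((2 * hsNorm y)⁻¹ * hsInner x y) := by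
    rw [hsInner_smul_left, hsInner_smul_right]
  set A := hsInner (f ((2 * hsNorm x)⁻¹ • x)) (f ((2 * hsNorm y)⁻¹ • y)) with hA
  set B := hsInner (f ((2 * hsNorm x)⁻¹ • x)) (f (-((2 * hsNorm y)⁻¹ • y))) with hB
  set C := hsInner (f (-((2 * hsNorm x)⁻¹ • x))) (f ((2 * hsNorm y)⁻¹ • y)) with hC
  set D := hsInner (f (-((2 * hsNorm x)⁻¹ • x))) (f (-((2 * hsNorm y)⁻¹ • y))) with hD
  set p := hsInner ((2 * hsNorm x)⁻¹ • x) ((2 * hsNorm y)⁻¹ • y) with hp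
  set nx := hsNorm x with hnxd
  set ny := hsNorm y with hnyd
  have hS : |((A - B) - (C - D)) - 4 * p| ≤ 4 * ε := by
    rw [abs_le] at h1 h2 h3 h4 ⊢
    constructor <;> [linarith; linarith]
  have key : nx * (ny * ((A - B) - (C - D))) - hsInner x y
      = nx * ny * (((A - B) - (C - D)) - 4 * p) := by
    rw [hab]
    field_simp
    ring
  rw [key, abs_mul, abs_of_pos (mul_pos hnx hny)]
  calc nx * ny * |((A - B) - (C - D)) - 4 * p| ≤ nx * ny * (4 * ε) :=
        mul_le_mul_of_nonneg_left hS (mul_pos hnx hny).le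
    _ = 4 * ε * nx * ny := by ring
end

section
/- Let X and Y be finite-dimensional real inner product spaces (with the norms induced by their inner products), let F : X → Y be almost-linear with constant δ > 0, and let N be the envelope norm on Y × X generated by F. Then for every n ≥ 3 and all z₁,…,z_n ∈ Y × X: (2^{−n} Σ_{ε∈{−1,1}ⁿ} N(Σⱼ εⱼzⱼ)²)^{1/2} ≤ 2(1+√2)·log₂ n · (Σⱼ N(zⱼ)²)^{1/2}. -/
/-!
Write `z = (y, x)` as `(y - F x, 0) + (F x, x)`. The envelope norm `N` is subadditive, at most
`‖y‖ / δ` on `(y, 0)`, and dominates `‖y - F x‖ / δ` (by almost-linearity) and `‖x‖`; since `Y` is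
a Hilbert space, the parts `(y - F x, 0)` contribute at most `√(∑ N(zⱼ)²)`, and it remains to prove
a type-2 bound for points `(F x, x)` of the graph.

A graph bound with constant `c` for `m` points gives `c + √2` for `2m` points: pair the points as
`(aᵢ, bᵢ)` and use the signs `σᵢ` and `σᵢτᵢ`. For fixed `τ` this is a `σ`-Rademacher sum of
`(F aᵢ, aᵢ) + τᵢ (F bᵢ, bᵢ)`, which splits as above into graph points over `aᵢ + τᵢ bᵢ` and defects
of norm at most `δ (‖aᵢ‖ + ‖bᵢ‖)`; averaging over `τ` uses the parallelogram law in `X`. Starting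
from `1` for one point and padding with zeros gives `1 + √2 ⌈log₂ n⌉` for `n` points, and
`2 + √2 ⌈log₂ n⌉ ≤ 2 (1 + √2) log₂ n` for `n ≥ 3`.
-/

open Finset

/-- `F` is almost-linear with constant `δ`. -/
def AlmostLinear {X Y : Type*} [NormedAddCommGroup X] [NormedSpace ℝ X]
    [NormedAddCommGroup Y] [NormedSpace ℝ Y] (F : X → Y) (δ : ℝ) : Prop :=
  (∀ (c : ℝ) (x : X), F (c • x) = c • F x) ∧
  ∀ (m : ℕ) (x : Fin m → X) (l : Fin m → ℝ),
    ‖(∑ i, l i • F (x i)) - F (∑ i, l i • x i)‖ ≤ δ * ∑ i, |l i| * ‖x i‖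

/-- The quasi-norm on `Y × X` associated to `F`. -/
noncomputable def quasiNormF {X Y : Type*} [NormedAddCommGroup X] [NormedAddCommGroup Y]
    (F : X → Y) (δ : ℝ) (z : Y × X) : ℝ :=
  ‖z.1 - F z.2‖ / δ + ‖z.2‖

/-- The envelope norm generated by a (quasi-)norm-like function `q`. -/
noncomputable def envNorm {Z : Type*} [AddCommGroup Z] (q : Z → ℝ) (z : Z) : ℝ :=
  sInf { s : ℝ | ∃ (n : ℕ) (w : Fin n → Z), z = ∑ j, w j ∧ s = ∑ j, q (w j) }

/-- `Z` (with norm-like function `nn`) satisfies the Rademacher type-2 inequality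
for sequences of length `n` with constant `T`. -/
def RadType2With {Z : Type*} [AddCommGroup Z] (nn : Z → ℝ) (n : ℕ) (T : ℝ) : Prop :=
  ∀ z : Fin n → Z,
    Real.sqrt ((∑ ε : Fin n → Bool, nn (∑ j, if ε j then z j else -z j) ^ 2) / 2 ^ n) ≤
      T * Real.sqrt (∑ j, nn (z j) ^ 2)

/-- Rademacher cotype-2 inequality with constant `C`. -/
def RadCotype2With {Z : Type*} [AddCommGroup Z] (nn : Z → ℝ) (n : ℕ) (C : ℝ) : Prop :=
  ∀ z : Fin n → Z,
    Real.sqrt (∑ j, nn (z j) ^ 2) ≤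
      C * Real.sqrt ((∑ ε : Fin n → Bool, nn (∑ j, if ε j then z j else -z j) ^ 2) / 2 ^ n)

open scoped Pointwise BigOperators

section EnvelopeNorm

variable {Z : Type*} [AddCommGroup Z] {q : Z → ℝ}

lemma envNorm_set_nonempty (z : Z) :
    { s : ℝ | ∃ (n : ℕ) (w : Fin n → Z), z = ∑ j, w j ∧ s = ∑ j, q (w j) }.Nonempty :=
  ⟨q z, 1, fun _ => z, by simp, by simp⟩

lemma envNorm_set_bddBelow (hq : ∀ z, 0 ≤ q z) (z : Z) :
    BddBelow { s : ℝ | ∃ (n : ℕ) (w : Fin n → Z), z = ∑ j, w j ∧ s = ∑ j, q (w j) } :=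
  ⟨0, by rintro _ ⟨n, w, -, rfl⟩; exact sum_nonneg fun _ _ => hq _⟩

lemma envNorm_le_self (hq : ∀ z, 0 ≤ q z) (z : Z) : envNorm q z ≤ q z :=
  csInf_le (envNorm_set_bddBelow hq z) ⟨1, fun _ => z, by simp, by simp⟩

lemma le_envNorm {p : Z → ℝ} (hp : ∀ n (w : Fin n → Z), p (∑ j, w j) ≤ ∑ j, q (w j)) (z : Z) :
    p z ≤ envNorm q z :=
  le_csInf (envNorm_set_nonempty z) (by rintro _ ⟨n, w, rfl, rfl⟩; exact hp n w)

lemma envNorm_nonneg (hq : ∀ z, 0 ≤ q z) (z : Z) : 0 ≤ envNorm q z :=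
  le_envNorm (p := 0) (fun _ _ => sum_nonneg fun _ _ => hq _) z

lemma envNorm_add_le (hq : ∀ z, 0 ≤ q z) (z z' : Z) :
    envNorm q (z + z') ≤ envNorm q z + envNorm q z' := by
  unfold envNorm
  rw [← csInf_add (envNorm_set_nonempty z) (envNorm_set_bddBelow hq z)
    (envNorm_set_nonempty z') (envNorm_set_bddBelow hq z')]
  refine csInf_le_csInf (envNorm_set_bddBelow hq _)
    ((envNorm_set_nonempty z).add (envNorm_set_nonempty z')) ?_
  rintro _ ⟨_, ⟨n, w, rfl, rfl⟩, _, ⟨n', w', rfl, rfl⟩, rfl⟩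
  refine ⟨n + n', Fin.append w w', ?_, ?_⟩ <;> simp [Fin.sum_univ_add]

end EnvelopeNorm

def boolSign (b : Bool) : ℝ := if b then 1 else -1

@[simp] lemma boolSign_true : boolSign true = 1 := rfl

@[simp] lemma boolSign_false : boolSign false = -1 := rfl

@[simp] lemma boolSign_not (b : Bool) : boolSign (!b) = -boolSign b := by cases b <;> simp

lemma boolSign_mul_self (b : Bool) : boolSign b * boolSign b = 1 := by cases b <;> simp

lemma abs_boolSign (b : Bool) : |boolSign b| = 1 := by cases b <;> simp

lemma boolSign_beq (a b : Bool) : boolSign (a == b) = boolSign a * boolSign b := by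
  cases a <;> cases b <;> simp

lemma ite_neg_eq_boolSign_smul {M : Type*} [AddCommGroup M] [Module ℝ M] (b : Bool) (z : M) :
    (if b then z else -z) = boolSign b • z := by cases b <;> simp

section SignCube

variable {ι : Type*} [Fintype ι] [DecidableEq ι]

lemma expect_boolSign_mul_eq_zero (i : ι) {g : (ι → Bool) → ℝ}
    (hg : ∀ ε, g (Function.update ε i (!ε i)) = g ε) :
    𝔼 ε : ι → Bool, boolSign (ε i) * g ε = 0 := by
  let flip : (ι → Bool) ≃ (ι → Bool) :=
    { toFun ε := Function.update ε i (!ε i)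
      invFun ε := Function.update ε i (!ε i)
      left_inv ε := by ext j; by_cases h : j = i <;> simp [Function.update, h]
      right_inv ε := by ext j; by_cases h : j = i <;> simp [Function.update, h] }
  have := Fintype.expect_equiv flip (fun ε => -(boolSign (ε i) * g ε))
    (fun ε => boolSign (ε i) * g ε) fun ε => by simp [flip, hg]
  rw [expect_neg_distrib] at this
  linarith

lemma expect_boolSign (i : ι) : 𝔼 ε : ι → Bool, boolSign (ε i) = 0 := by
  simpa using expect_boolSign_mul_eq_zero i (g := 1) fun _ => rfl

lemma expect_boolSign_mul_boolSign (i j : ι) :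
    𝔼 ε : ι → Bool, boolSign (ε i) * boolSign (ε j) = if i = j then 1 else 0 := by
  split_ifs with h
  · simp [h, boolSign_mul_self]
  · exact expect_boolSign_mul_eq_zero i fun ε => by simp [Function.update_of_ne (Ne.symm h)]

variable {H : Type*} [NormedAddCommGroup H] [InnerProductSpace ℝ H]

lemma expect_norm_sum_boolSign_smul_sq (w : ι → H) :
    𝔼 ε : ι → Bool, ‖∑ i, boolSign (ε i) • w i‖ ^ 2 = ∑ i, ‖w i‖ ^ 2 := by
  have expand : ∀ ε : ι → Bool, ‖∑ i, boolSign (ε i) • w i‖ ^ 2 =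
      ∑ i, ∑ j, boolSign (ε i) * boolSign (ε j) * inner ℝ (w i) (w j) := by
    intro ε
    rw [← real_inner_self_eq_norm_sq, sum_inner]
    simp only [inner_sum, real_inner_smul_left, real_inner_smul_right]
    exact sum_congr rfl fun _ _ => sum_congr rfl fun _ _ => by ring
  simp only [expand, expect_sum_comm, ← expect_mul, expect_boolSign_mul_boolSign, ite_mul,
    one_mul, zero_mul, sum_ite_eq, mem_univ, if_true, real_inner_self_eq_norm_sq]

lemma expect_norm_add_boolSign_smul_sq (i : ι) (a b : H) :
    𝔼 ε : ι → Bool, ‖a + boolSign (ε i) • b‖ ^ 2 = ‖a‖ ^ 2 + ‖b‖ ^ 2 := by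
  have expand : ∀ ε : ι → Bool, ‖a + boolSign (ε i) • b‖ ^ 2 =
      ‖a‖ ^ 2 + ‖b‖ ^ 2 + boolSign (ε i) * (2 * inner ℝ a b) := by
    intro ε
    rw [norm_add_sq_real, norm_smul, real_inner_smul_right, Real.norm_eq_abs, abs_boolSign]
    ring
  simp only [expand, expect_add_distrib, Fintype.expect_const, ← expect_mul, expect_boolSign,
    zero_mul, add_zero]

end SignCube

lemma sqrt_expect_sq_le_add {α : Type*} [Fintype α] {u v w : α → ℝ} (hu : ∀ a, 0 ≤ u a)
    (huvw : ∀ a, u a ≤ v a + w a) :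
    √(𝔼 a, u a ^ 2) ≤ √(𝔼 a, v a ^ 2) + √(𝔼 a, w a ^ 2) := by
  have cauchy_schwarz : 𝔼 a, v a * w a ≤ √(𝔼 a, v a ^ 2) * √(𝔼 a, w a ^ 2) := by
    rw [← Real.sqrt_mul (expect_nonneg fun _ _ => sq_nonneg _)]
    exact Real.le_sqrt_of_sq_le (expect_mul_sq_le_sq_mul_sq _ _ _)
  refine Real.sqrt_le_iff.mpr ⟨by positivity, ?_⟩
  calc 𝔼 a, u a ^ 2 ≤ 𝔼 a, (v a ^ 2 + 2 * (v a * w a) + w a ^ 2) :=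
        expect_le_expect fun a _ => by nlinarith [hu a, huvw a]
    _ = 𝔼 a, v a ^ 2 + 2 * 𝔼 a, v a * w a + 𝔼 a, w a ^ 2 := by
        rw [expect_add_distrib, expect_add_distrib, ← mul_expect]
    _ ≤ (√(𝔼 a, v a ^ 2) + √(𝔼 a, w a ^ 2)) ^ 2 := by
        rw [add_sq, Real.sq_sqrt (expect_nonneg fun _ _ => sq_nonneg _),
          Real.sq_sqrt (expect_nonneg fun _ _ => sq_nonneg _)]
        linarith

section EnvelopeOfGraph

variable {X Y : Type*} [NormedAddCommGroup X] [NormedAddCommGroup Y] {F : X → Y} {δ : ℝ}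

lemma quasiNormF_nonneg (hδ : 0 ≤ δ) (z : Y × X) : 0 ≤ quasiNormF F δ z := by
  unfold quasiNormF
  positivity

lemma norm_snd_le_envNorm (hδ : 0 ≤ δ) (z : Y × X) : ‖z.2‖ ≤ envNorm (quasiNormF F δ) z := by
  refine le_envNorm (p := fun z => ‖z.2‖) (fun n w => ?_) z
  calc ‖(∑ j, w j).2‖ ≤ ∑ j, ‖(w j).2‖ := by rw [Prod.snd_sum]; exact norm_sum_le _ _
    _ ≤ ∑ j, quasiNormF F δ (w j) :=
      sum_le_sum fun j _ => le_add_of_nonneg_left (by positivity)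

lemma envNorm_mk_zero_le (hδ : 0 ≤ δ) (hF0 : F 0 = 0) (y : Y) :
    envNorm (quasiNormF F δ) (y, 0) ≤ ‖y‖ / δ :=
  (envNorm_le_self (quasiNormF_nonneg hδ) _).trans_eq (by simp [quasiNormF, hF0])

lemma envNorm_graph_le (hδ : 0 ≤ δ) (x : X) : envNorm (quasiNormF F δ) (F x, x) ≤ ‖x‖ :=
  (envNorm_le_self (quasiNormF_nonneg hδ) _).trans_eq (by simp [quasiNormF])

variable [NormedSpace ℝ X] [NormedSpace ℝ Y]

lemma AlmostLinear.map_zero (hF : AlmostLinear F δ) : F 0 = 0 := by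
  simpa using hF.1 0 0

lemma AlmostLinear.norm_add_smul_sub_le (hF : AlmostLinear F δ) (a b : X) {c : ℝ}
    (hc : |c| = 1) : ‖F a + c • F b - F (a + c • b)‖ ≤ δ * (‖a‖ + ‖b‖) := by
  simpa [Fin.sum_univ_two, hc] using hF.2 2 ![a, b] ![1, c]

lemma norm_fst_sub_div_le_envNorm (hδ : 0 < δ) (hF : AlmostLinear F δ) (z : Y × X) :
    ‖z.1 - F z.2‖ / δ ≤ envNorm (quasiNormF F δ) z := by
  refine le_envNorm (p := fun z => ‖z.1 - F z.2‖ / δ) (fun n w => ?_) z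
  have hdefect := hF.2 n (fun j => (w j).2) 1
  simp only [Pi.one_apply, one_smul, abs_one, one_mul] at hdefect
  have split : (∑ j, w j).1 - F (∑ j, w j).2 =
      ∑ j, ((w j).1 - F (w j).2) + (∑ j, F (w j).2 - F (∑ j, (w j).2)) := by
    rw [Prod.fst_sum, Prod.snd_sum, sum_sub_distrib]; abel
  rw [div_le_iff₀ hδ, split]
  calc _ ≤ ∑ j, ‖(w j).1 - F (w j).2‖ + δ * ∑ j, ‖(w j).2‖ :=
        (norm_add_le _ _).trans (add_le_add (norm_sum_le _ _) hdefect)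
    _ = (∑ j, quasiNormF F δ (w j)) * δ := by
        simp only [quasiNormF, sum_add_distrib, ← sum_div]
        field_simp

lemma envNorm_sum_smul_le {ι : Type*} [Fintype ι] (hδ : 0 ≤ δ) (hF0 : F 0 = 0) (s : ι → ℝ)
    (w : ι → Y × X) :
    envNorm (quasiNormF F δ) (∑ i, s i • w i) ≤
      ‖∑ i, s i • ((w i).1 - F (w i).2)‖ / δ +
        envNorm (quasiNormF F δ) (∑ i, s i • (F (w i).2, (w i).2)) := by
  have split : ∑ i, s i • w i =
      (∑ i, s i • ((w i).1 - F (w i).2), 0) + ∑ i, s i • (F (w i).2, (w i).2) := by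
    ext <;> simp [Prod.fst_sum, Prod.snd_sum, smul_sub]
  rw [split]
  exact (envNorm_add_le (quasiNormF_nonneg hδ) _ _).trans
    (add_le_add_left (envNorm_mk_zero_le hδ hF0 _) _)

end EnvelopeOfGraph

section GraphType2

variable {X Y : Type*} [NormedAddCommGroup X] [NormedSpace ℝ X] [NormedAddCommGroup Y]
  [NormedSpace ℝ Y] {F : X → Y} {δ c : ℝ} {ι κ : Type*} [Fintype ι] [DecidableEq ι]
  [Fintype κ] [DecidableEq κ]

def GraphType2With (F : X → Y) (δ : ℝ) (ι : Type*) [Fintype ι] [DecidableEq ι] (c : ℝ) : Prop :=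
  ∀ x : ι → X,
    √(𝔼 ε : ι → Bool, envNorm (quasiNormF F δ) (∑ i, boolSign (ε i) • (F (x i), x i)) ^ 2) ≤
      c * √(∑ i, ‖x i‖ ^ 2)

lemma GraphType2With.of_equiv (e : ι ≃ κ) (h : GraphType2With F δ κ c) :
    GraphType2With F δ ι c := by
  intro x
  have reindex : ∀ f : (ι → Bool) → ℝ, 𝔼 ε, f ε = 𝔼 ε : κ → Bool, f (ε ∘ e) := fun f =>
    Fintype.expect_equiv (e.arrowCongr (Equiv.refl Bool)) _ _ fun ε => by
      simp [Equiv.arrowCongr, Function.comp_def]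
  rw [reindex, ← e.symm.sum_comp]
  simpa [← e.symm.sum_comp, Function.comp_def] using h (x ∘ e.symm)

lemma expect_comp_inl {β : Type*} [Fintype β] [Nonempty β] (f : (ι → β) → ℝ) :
    𝔼 ε : ι ⊕ κ → β, f (ε ∘ Sum.inl) = 𝔼 ε, f ε := by
  rw [Fintype.expect_equiv (Equiv.sumArrowEquivProdArrow ι κ β) (fun ε => f (ε ∘ Sum.inl))
      (fun p => f p.1) fun _ => rfl, ← univ_product_univ, expect_product' univ univ fun a _ => f a]
  simp

lemma GraphType2With.of_sum (hF0 : F 0 = 0) (h : GraphType2With F δ (ι ⊕ κ) c) :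
    GraphType2With F δ ι c := by
  intro x
  have pad : ∀ ε : ι ⊕ κ → Bool,
      ∑ p, boolSign (ε p) • (F (Sum.elim x 0 p), Sum.elim x 0 p) =
        ∑ i, boolSign ((ε ∘ Sum.inl) i) • (F (x i), x i) := by
    simp [Fintype.sum_sum_type, hF0]
  have := h (Sum.elim x 0)
  simp only [pad] at this
  rw [expect_comp_inl (fun ε : ι → Bool =>
      envNorm (quasiNormF F δ) (∑ i, boolSign (ε i) • (F (x i), x i)) ^ 2),
    Fintype.sum_sum_type] at this
  simpa using this

end GraphType2

def signPairEquiv (ι : Type*) : (ι → Bool) × (ι → Bool) ≃ (ι × Bool → Bool) where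
  toFun p q := if q.2 then p.2 q.1 == p.1 q.1 else p.2 q.1
  invFun ε := (fun i => ε (i, false) == ε (i, true), fun i => ε (i, false))
  left_inv p := by
    ext i
    · show (p.2 i == (p.2 i == p.1 i)) = p.1 i
      cases p.1 i <;> cases p.2 i <;> rfl
    · rfl
  right_inv ε := by
    ext ⟨i, b⟩
    cases b
    · rfl
    · show (ε (i, false) == (ε (i, false) == ε (i, true))) = ε (i, true)
      cases ε (i, false) <;> cases ε (i, true) <;> rfl

lemma sum_signPairEquiv_smul {ι M : Type*} [Fintype ι] [AddCommGroup M] [Module ℝ M]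
    (τ σ : ι → Bool) (u : ι × Bool → M) :
    ∑ p, boolSign (signPairEquiv ι (τ, σ) p) • u p =
      ∑ i, boolSign (σ i) • (u (i, false) + boolSign (τ i) • u (i, true)) := by
  simp [Fintype.sum_prod_type, signPairEquiv, boolSign_beq, smul_add, mul_smul, add_comm]

lemma expect_signPairEquiv {ι : Type*} [Fintype ι] [DecidableEq ι]
    (f : (ι × Bool → Bool) → ℝ) :
    𝔼 ε, f ε = 𝔼 τ, 𝔼 σ, f (signPairEquiv ι (τ, σ)) := by
  rw [← Fintype.expect_equiv (signPairEquiv ι) _ f fun _ => rfl, ← univ_product_univ,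
    expect_product]

section InnerProduct

variable {X Y : Type*} [NormedAddCommGroup X] [InnerProductSpace ℝ X] [NormedAddCommGroup Y]
  [InnerProductSpace ℝ Y] {F : X → Y} {δ c : ℝ} {ι : Type*} [Fintype ι] [DecidableEq ι]

lemma GraphType2With.sqrt_expect_envNorm_sq_le (hδ : 0 < δ) (hF0 : F 0 = 0)
    (h : GraphType2With F δ ι c) (w : ι → Y × X) :
    √(𝔼 ε : ι → Bool, envNorm (quasiNormF F δ) (∑ i, boolSign (ε i) • w i) ^ 2) ≤
      √(∑ i, (‖(w i).1 - F (w i).2‖ / δ) ^ 2) + c * √(∑ i, ‖(w i).2‖ ^ 2) := by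
  have hilbert : 𝔼 ε : ι → Bool, (‖∑ i, boolSign (ε i) • ((w i).1 - F (w i).2)‖ / δ) ^ 2 =
      ∑ i, (‖(w i).1 - F (w i).2‖ / δ) ^ 2 := by
    simp only [div_pow, ← expect_div, expect_norm_sum_boolSign_smul_sq, sum_div]
  have := sqrt_expect_sq_le_add
    (u := fun ε : ι → Bool => envNorm (quasiNormF F δ) (∑ i, boolSign (ε i) • w i))
    (v := fun ε => ‖∑ i, boolSign (ε i) • ((w i).1 - F (w i).2)‖ / δ)
    (w := fun ε => envNorm (quasiNormF F δ) (∑ i, boolSign (ε i) • (F (w i).2, (w i).2)))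
    (fun _ => envNorm_nonneg (quasiNormF_nonneg hδ.le) _)
    fun ε => envNorm_sum_smul_le hδ.le hF0 (fun i => boolSign (ε i)) w
  rw [hilbert] at this
  exact this.trans (add_le_add_right (h _) _)

lemma graphType2With_of_unique [Unique ι] (hδ : 0 ≤ δ) (hF : AlmostLinear F δ) :
    GraphType2With F δ ι 1 := by
  intro x
  have bound : ∀ ε : ι → Bool,
      envNorm (quasiNormF F δ) (∑ i, boolSign (ε i) • (F (x i), x i)) ≤ ‖x default‖ := by
    intro ε
    rw [Fintype.sum_unique, Prod.smul_mk, ← hF.1]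
    refine (envNorm_graph_le hδ _).trans_eq ?_
    rw [norm_smul, Real.norm_eq_abs, abs_boolSign, one_mul]
  rw [Fintype.sum_unique, one_mul]
  exact Real.sqrt_le_sqrt (expect_le univ_nonempty fun ε _ =>
    pow_le_pow_left₀ (envNorm_nonneg (quasiNormF_nonneg hδ) _) (bound ε) 2)

lemma GraphType2With.prod_bool (hδ : 0 < δ) (hF : AlmostLinear F δ) (hc : 0 ≤ c)
    (h : GraphType2With F δ ι c) : GraphType2With F δ (ι × Bool) (c + √2) := by
  intro x
  set a : ι → X := fun i => x (i, false)
  set b : ι → X := fun i => x (i, true)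
  set S := ∑ i, (‖a i‖ ^ 2 + ‖b i‖ ^ 2)
  have fiber : ∀ τ : ι → Bool,
      √(𝔼 σ, envNorm (quasiNormF F δ)
          (∑ p, boolSign (signPairEquiv ι (τ, σ) p) • (F (x p), x p)) ^ 2) ≤
        √2 * √S + c * √(∑ i, ‖a i + boolSign (τ i) • b i‖ ^ 2) := by
    intro τ
    simp only [sum_signPairEquiv_smul]
    refine (h.sqrt_expect_envNorm_sq_le hδ hF.map_zero _).trans (add_le_add ?_ le_rfl)
    calc _ ≤ √(∑ i, (‖a i‖ + ‖b i‖) ^ 2) := by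
          gcongr with i
          rw [div_le_iff₀' hδ]
          exact hF.norm_add_smul_sub_le _ _ (abs_boolSign _)
      _ ≤ √(2 * S) := by
          rw [mul_sum]
          gcongr with i
          nlinarith [sq_nonneg (‖a i‖ - ‖b i‖)]
      _ = √2 * √S := Real.sqrt_mul zero_le_two S
  rw [expect_signPairEquiv]
  calc _ = √(𝔼 τ, (√(𝔼 σ, envNorm (quasiNormF F δ)
          (∑ p, boolSign (signPairEquiv ι (τ, σ) p) • (F (x p), x p)) ^ 2)) ^ 2) := by
        simp only [Real.sq_sqrt (expect_nonneg fun _ _ => sq_nonneg _)]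
    _ ≤ √(𝔼 _τ : ι → Bool, (√2 * √S) ^ 2) +
          √(𝔼 τ : ι → Bool, (c * √(∑ i, ‖a i + boolSign (τ i) • b i‖ ^ 2)) ^ 2) :=
        sqrt_expect_sq_le_add (fun _ => Real.sqrt_nonneg _) fiber
    _ = √2 * √S + c * √S := by
        rw [Fintype.expect_const, Real.sqrt_sq (by positivity)]
        simp only [mul_pow, Real.sq_sqrt (sum_nonneg fun _ _ => sq_nonneg _), ← mul_expect,
          expect_sum_comm, expect_norm_add_boolSign_smul_sq]
        rw [Real.sqrt_mul (sq_nonneg c), Real.sqrt_sq hc]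
    _ = (c + √2) * √(∑ p, ‖x p‖ ^ 2) := by
        rw [show ∑ p, ‖x p‖ ^ 2 = S by
          rw [Fintype.sum_prod_type]
          exact sum_congr rfl fun i _ => by rw [Fintype.sum_bool, add_comm]]
        ring

lemma graphType2With_fin_two_pow (hδ : 0 < δ) (hF : AlmostLinear F δ) (k : ℕ) :
    GraphType2With F δ (Fin (2 ^ k)) (1 + √2 * k) := by
  induction k with
  | zero =>
    simpa using (graphType2With_of_unique (ι := Fin 1) hδ.le hF).of_equiv (finCongr (pow_zero 2))
  | succ k ih =>
    have split : Fin (2 ^ (k + 1)) ≃ Fin (2 ^ k) × Bool :=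
      (finCongr (pow_succ 2 k)).trans
        (finProdFinEquiv.symm.trans ((Equiv.refl _).prodCongr finTwoEquiv))
    convert (ih.prod_bool hδ hF (by positivity)).of_equiv split using 1
    push_cast
    ring

lemma graphType2With_fin_of_le_two_pow (hδ : 0 < δ) (hF : AlmostLinear F δ) {n k : ℕ}
    (hn : n ≤ 2 ^ k) : GraphType2With F δ (Fin n) (1 + √2 * k) :=
  ((graphType2With_fin_two_pow hδ hF k).of_equiv
    (finSumFinEquiv.trans (finCongr (Nat.add_sub_cancel' hn)))).of_sum hF.map_zero

end InnerProduct

lemma two_add_sqrt_two_mul_clog_le {n : ℕ} (hn : 3 ≤ n) :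
    2 + √2 * Nat.clog 2 n ≤ 2 * (1 + √2) * Real.logb 2 n := by
  have one_le_logb : 1 ≤ Real.logb 2 n := by
    rw [Real.le_logb_iff_rpow_le one_lt_two (by positivity), Real.rpow_one]
    exact_mod_cast (by omega : 2 ≤ n)
  have clog_lt : (Nat.clog 2 n : ℝ) < Real.logb 2 n + 1 := by
    have ceil_eq := Real.natCeil_logb_natCast 2 n
    push_cast at ceil_eq
    exact ceil_eq ▸ Nat.ceil_lt_add_one (by positivity)
  nlinarith [Real.sqrt_nonneg 2]

theorem stmt19_general {X Y : Type*}
    [NormedAddCommGroup X] [InnerProductSpace ℝ X]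
    [NormedAddCommGroup Y] [InnerProductSpace ℝ Y]
    (F : X → Y) (δ : ℝ) (hδ : 0 < δ) (hF : AlmostLinear F δ) :
    ∀ n : ℕ, 3 ≤ n →
      RadType2With (envNorm (quasiNormF F δ)) n (2 * (1 + Real.sqrt 2) * Real.logb 2 n) := by
  intro n hn z
  set k := Nat.clog 2 n
  have graph_bound := graphType2With_fin_of_le_two_pow hδ hF (Nat.le_pow_clog one_lt_two n)
  calc _ = √(𝔼 ε : Fin n → Bool,
          envNorm (quasiNormF F δ) (∑ j, boolSign (ε j) • z j) ^ 2) := by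
        simp [ite_neg_eq_boolSign_smul, Fintype.expect_eq_sum_div_card]
    _ ≤ √(∑ j, envNorm (quasiNormF F δ) (z j) ^ 2) +
          (1 + √2 * k) * √(∑ j, envNorm (quasiNormF F δ) (z j) ^ 2) := by
        refine (graph_bound.sqrt_expect_envNorm_sq_le hδ hF.map_zero z).trans (add_le_add ?_ ?_)
        · gcongr with j
          exact norm_fst_sub_div_le_envNorm hδ hF _
        · gcongr with j
          exact norm_snd_le_envNorm hδ.le _
    _ = (2 + √2 * k) * √(∑ j, envNorm (quasiNormF F δ) (z j) ^ 2) := by ring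
    _ ≤ _ := mul_le_mul_of_nonneg_right (two_add_sqrt_two_mul_clog_le hn) (Real.sqrt_nonneg _)

theorem stmt19 {X Y : Type*}
    [NormedAddCommGroup X] [InnerProductSpace ℝ X] [FiniteDimensional ℝ X]
    [NormedAddCommGroup Y] [InnerProductSpace ℝ Y] [FiniteDimensional ℝ Y]
    (F : X → Y) (δ : ℝ) (hδ : 0 < δ) (hF : AlmostLinear F δ) :
    ∀ n : ℕ, 3 ≤ n →
      RadType2With (envNorm (quasiNormF F δ)) n (2 * (1 + Real.sqrt 2) * Real.logb 2 n) :=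
  stmt19_general F δ hδ hF
end
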